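/- Let t ∈ (1/2, 1] be a real number. Then there is no minimally t-tough graph with a universal vertex. -/

import Mathlib

open SimpleGraph
open scoped ENNReal NNReal

/-- The number of connected components of a graph. -/
noncomputable def componentCount {V : Type*} (G : SimpleGraph V) : ℕ :=
  Nat.card G.ConnectedComponent

/-- `S` is a separator of `G` if `G - S` has at least two connected components. -/
def SimpleGraph.IsSeparator {V : Type*} (G : SimpleGraph V) (S : Finset V) : Prop :=
  2 ≤ componentCount (G.induce ((↑S : Set V)ᶜ))

/-- The toughness of a graph, as an extended nonnegative real:
the infimum over all separators `S` of `|S| / c(G - S)`; `∞` if there is no separator. -/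
noncomputable def SimpleGraph.toughness {V : Type*} (G : SimpleGraph V) : ℝ≥0∞ :=
  ⨅ (S : Finset V) (_ : G.IsSeparator S),
    (S.card : ℝ≥0∞) / (componentCount (G.induce ((↑S : Set V)ᶜ)) : ℝ≥0∞)

/-- A graph is minimally tough if deleting any edge strictly decreases the toughness. -/
def SimpleGraph.MinimallyTough {V : Type*} (G : SimpleGraph V) : Prop :=
  ∀ e ∈ G.edgeSet, (G.deleteEdges {e}).toughness < G.toughness

/-- The degree of a vertex (as the cardinality of its neighbourhood). -/
noncomputable def SimpleGraph.deg {V : Type*} (G : SimpleGraph V) (v : V) : ℕ :=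
  (G.neighborSet v).ncard

/-- A graph is `d`-regular if every vertex has degree `d`. -/
def SimpleGraph.RegularOfDegree {V : Type*} (G : SimpleGraph V) (d : ℕ) : Prop :=
  ∀ v, G.deg v = d

/-- Two `u`-`v` walks are internally disjoint if `u` and `v` are their only common vertices. -/
def SimpleGraph.InternallyDisjoint {V : Type*} {G : SimpleGraph V} {u v : V}
    (p q : G.Walk u v) : Prop :=
  ∀ w, w ∈ p.support → w ∈ q.support → w = u ∨ w = v

/-- The local connectivity `κ_G(u,v)`: the maximum number of pairwise internally
vertex-disjoint `u`-`v` paths in `G`. -/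
noncomputable def SimpleGraph.localConnectivity {V : Type*} (G : SimpleGraph V) (u v : V) : ℕ :=
  sSup {n | ∃ P : Set (G.Path u v), P.ncard = n ∧
    P.Pairwise fun p q => SimpleGraph.InternallyDisjoint (p : G.Walk u v) (q : G.Walk u v)}

/-- A graph is `k`-connected if it has more than `k` vertices and removing fewer than `k`
vertices leaves it connected. -/
def SimpleGraph.IsKConnected {V : Type*} (G : SimpleGraph V) (k : ℕ) : Prop :=
  k < Nat.card V ∧ ∀ S : Finset V, S.card < k → (G.induce ((↑S : Set V)ᶜ)).Connected

/-- The connectivity `κ(G)` of a graph: the largest `k` such that `G` is `k`-connected. -/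
noncomputable def SimpleGraph.connectivity {V : Type*} (G : SimpleGraph V) : ℕ :=
  sSup {k | G.IsKConnected k}

/-- The maximum size of a matching in `G`. -/
noncomputable def SimpleGraph.maxMatching {V : Type*} (G : SimpleGraph V) : ℕ :=
  sSup {n | ∃ M : G.Subgraph, M.IsMatching ∧ M.edgeSet.ncard = n}

/-- A walk has a chord if some edge of `G` joins two of its vertices but is not an
edge of the walk. -/
def SimpleGraph.Walk.HasChord {V : Type*} {G : SimpleGraph V} {v : V} (c : G.Walk v v) : Prop :=
  ∃ x y, x ∈ c.support ∧ y ∈ c.support ∧ G.Adj x y ∧ s(x, y) ∉ c.edges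

/-- A graph is chordal if every cycle of length at least 4 has a chord. -/
def SimpleGraph.IsChordal {V : Type*} (G : SimpleGraph V) : Prop :=
  ∀ (v : V) (c : G.Walk v v), c.IsCycle → 4 ≤ c.length → c.HasChord

/-- A vertex is universal if it is adjacent to all other vertices. -/
def SimpleGraph.IsUniversalVtx {V : Type*} (G : SimpleGraph V) (v : V) : Prop :=
  ∀ w, w ≠ v → G.Adj v w


/-! Let `v` be universal and `w ≠ v`. Minimality at the edge `vw` gives a separator `S` of
`G - vw` with `|S| / c(G - vw - S) < t ≤ 1`, and `S` avoids `v` and `w`, for otherwise it would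
separate `G` itself with the same ratio. In `G - vw - S` every vertex other than `w` is joined
to `v`, so there are exactly two components; hence `|S| ≤ 1` and every neighbour of `w` other
than `v` lies in `S`. Thus `G - v` has maximum degree at most one. Since `t > 1/2`, `{v}` is not
a separator, so `G - v` is connected, and any two of its vertices are equal or adjacent. A
separator of `G` exists because `t` is finite, and it must contain `v`; but then it cannot
separate two vertices of `G - v`. -/

lemma ENNReal.natCast_le_one_of_div_lt_one {a c : ℕ} (h : (a : ℝ≥0∞) / c < 1) (hc : c ≤ 2) :
    a ≤ 1 := by
  rcases Nat.eq_zero_or_pos a with rfl | ha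
  · exact zero_le_one
  have hac : (a : ℝ≥0∞) < 1 * c :=
    (ENNReal.div_lt_iff (Or.inr (by exact_mod_cast ha.ne')) (Or.inr (natCast_ne_top a))).mp h
  rw [one_mul, Nat.cast_lt] at hac
  omega

namespace SimpleGraph

variable {V : Type*}

section Reachability

variable {W : Type*} {H : SimpleGraph W}

lemma card_connectedComponent_le_of_forall_reachable (s : Finset W)
    (hs : ∀ u, ∃ x ∈ s, H.Reachable x u) : Nat.card H.ConnectedComponent ≤ s.card := by
  rw [← Nat.card_eq_finsetCard]
  refine Nat.card_le_card_of_surjective (fun x : s => H.connectedComponentMk x) ?_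
  refine ConnectedComponent.ind fun u => ?_
  obtain ⟨x, hx, hxu⟩ := hs u
  exact ⟨⟨x, hx⟩, ConnectedComponent.sound hxu⟩

lemma card_connectedComponent_le_one_of_forall_reachable (x : W) (hx : ∀ u, H.Reachable x u) :
    Nat.card H.ConnectedComponent ≤ 1 :=
  card_connectedComponent_le_of_forall_reachable {x} fun u =>
    ⟨x, Finset.mem_singleton_self x, hx u⟩

lemma Reachable.eq_or_adj_of_forall_adj_eq (hH : ∀ a b c, H.Adj a b → H.Adj a c → b = c)
    {x y : W} (hxy : H.Reachable x y) : x = y ∨ H.Adj x y := by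
  obtain ⟨p⟩ := hxy
  induction p with
  | nil => exact Or.inl rfl
  | cons hxz _ ih =>
    rcases ih with rfl | hzy
    · exact Or.inr hxz
    · exact Or.inl (hH _ _ _ hxz.symm hzy)

end Reachability

lemma IsUniversalVtx.reachable_induce {G : SimpleGraph V} {v : V} (hv : G.IsUniversalVtx v)
    {s : Set V} (hvs : v ∈ s) : ∀ u : s, (G.induce s).Reachable ⟨v, hvs⟩ u := by
  rintro ⟨u, hu⟩
  by_cases huv : u = v
  · subst huv; rfl
  · exact (induce_adj.mpr (hv u huv)).reachable

lemma IsUniversalVtx.not_isSeparator {G : SimpleGraph V} {v : V} (hv : G.IsUniversalVtx v)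
    {S : Finset V} (hvS : v ∉ S) : ¬ G.IsSeparator S := by
  have := card_connectedComponent_le_one_of_forall_reachable _
    (hv.reachable_induce (s := (↑S)ᶜ) hvS)
  unfold IsSeparator componentCount
  omega

section Toughness

variable {G : SimpleGraph V}

lemma toughness_le_of_isSeparator {S : Finset V} (hS : G.IsSeparator S) :
    G.toughness ≤ S.card / componentCount (G.induce (↑S)ᶜ) :=
  iInf₂_le S hS

lemma exists_isSeparator_of_toughness_lt {a : ℝ≥0∞} (h : G.toughness < a) :
    ∃ S : Finset V, G.IsSeparator S ∧ (S.card : ℝ≥0∞) / componentCount (G.induce (↑S)ᶜ) < a := by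
  simpa only [toughness, iInf_lt_iff, exists_prop] using h

lemma not_isSeparator_singleton (h : 2⁻¹ < G.toughness) (v : V) : ¬ G.IsSeparator {v} := by
  intro hv
  refine (toughness_le_of_isSeparator hv).not_gt (h.trans_le' ?_)
  rw [Finset.card_singleton, Nat.cast_one, one_div]
  exact ENNReal.inv_le_inv.mpr (by exact_mod_cast hv)

lemma induce_deleteEdges_singleton_of_notMem {e : Sym2 V} {s : Set V} {x : V} (hxe : x ∈ e)
    (hxs : x ∉ s) : (G.deleteEdges {e}).induce s = G.induce s := by
  ext a b
  simp only [induce_adj, deleteEdges_adj, Set.mem_singleton_iff, and_iff_left_iff_imp]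
  rintro - rfl
  rcases Sym2.mem_iff.mp hxe with rfl | rfl
  exacts [hxs a.2, hxs b.2]

lemma MinimallyTough.exists_isSeparator_deleteEdges (hmin : G.MinimallyTough) {e : Sym2 V}
    (he : e ∈ G.edgeSet) :
    ∃ S : Finset V, (G.deleteEdges {e}).IsSeparator S ∧
      (S.card : ℝ≥0∞) / componentCount ((G.deleteEdges {e}).induce (↑S)ᶜ) < G.toughness ∧
      ∀ x ∈ e, x ∉ S := by
  obtain ⟨S, hS, hlt⟩ := exists_isSeparator_of_toughness_lt (hmin e he)
  refine ⟨S, hS, hlt, fun x hxe hxS => ?_⟩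
  have hind := induce_deleteEdges_singleton_of_notMem (G := G) (s := (↑S)ᶜ) hxe (by simpa)
  rw [IsSeparator, hind] at hS
  rw [hind] at hlt
  exact (toughness_le_of_isSeparator hS).not_gt hlt

end Toughness

namespace IsUniversalVtx

variable {G : SimpleGraph V} {v w : V} {S : Finset V}

lemma reachable_deleteEdges_induce (hv : G.IsUniversalVtx v) (hvS : v ∉ S) :
    ∀ u : ((↑S : Set V)ᶜ : Set V), (u : V) ≠ w →
      ((G.deleteEdges {s(v, w)}).induce (↑S)ᶜ).Reachable ⟨v, hvS⟩ u := by
  rintro ⟨u, hu⟩ huw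
  by_cases huv : u = v
  · subst huv; rfl
  · refine Adj.reachable (induce_adj.mpr (deleteEdges_adj.mpr ⟨hv u huv, ?_⟩))
    simpa [Sym2.congr_right, huv] using huw

lemma componentCount_deleteEdges_induce_le_two (hv : G.IsUniversalVtx v) (hvS : v ∉ S)
    (hwS : w ∉ S) : componentCount ((G.deleteEdges {s(v, w)}).induce (↑S)ᶜ) ≤ 2 := by
  classical
  refine (card_connectedComponent_le_of_forall_reachable {⟨v, hvS⟩, ⟨w, hwS⟩} ?_).trans
    Finset.card_le_two
  rintro ⟨u, hu⟩
  by_cases huw : u = w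
  · subst huw; exact ⟨_, by simp, .rfl⟩
  · exact ⟨_, by simp, hv.reachable_deleteEdges_induce hvS ⟨u, hu⟩ huw⟩

lemma mem_of_adj_of_isSeparator_deleteEdges (hv : G.IsUniversalVtx v) (hw : w ≠ v)
    (hS : (G.deleteEdges {s(v, w)}).IsSeparator S) (hvS : v ∉ S) (hwS : w ∉ S) {u : V}
    (hwu : G.Adj w u) (huv : u ≠ v) : u ∈ S := by
  by_contra huS
  have hvw : ((G.deleteEdges {s(v, w)}).induce (↑S)ᶜ).Reachable ⟨v, hvS⟩ ⟨w, hwS⟩ := by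
    refine (hv.reachable_deleteEdges_induce hvS ⟨u, huS⟩ hwu.ne').trans (Adj.reachable ?_)
    refine induce_adj.mpr (deleteEdges_adj.mpr ⟨hwu.symm, ?_⟩)
    simp [hw, huv]
  have hall : ∀ u, ((G.deleteEdges {s(v, w)}).induce (↑S)ᶜ).Reachable ⟨v, hvS⟩ u := by
    rintro ⟨u, hu⟩
    by_cases huw : u = w
    · subst huw; exact hvw
    · exact hv.reachable_deleteEdges_induce hvS ⟨u, hu⟩ huw
  have := card_connectedComponent_le_one_of_forall_reachable _ hall
  unfold IsSeparator componentCount at hS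
  omega

lemma eq_of_adj_of_adj {u₁ u₂ : V} (hv : G.IsUniversalVtx v) (hmin : G.MinimallyTough)
    (ht : G.toughness ≤ 1) (hw : w ≠ v) (h₁ : G.Adj w u₁) (h₂ : G.Adj w u₂) (hu₁ : u₁ ≠ v)
    (hu₂ : u₂ ≠ v) : u₁ = u₂ := by
  obtain ⟨S, hS, hlt, hvwS⟩ := hmin.exists_isSeparator_deleteEdges (G.mem_edgeSet.mpr (hv w hw))
  have hvS := hvwS v (Sym2.mem_mk_left v w)
  have hwS := hvwS w (Sym2.mem_mk_right v w)
  have hcard : S.card ≤ 1 :=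
    ENNReal.natCast_le_one_of_div_lt_one (hlt.trans_le ht)
      (hv.componentCount_deleteEdges_induce_le_two hvS hwS)
  exact Finset.card_le_one.mp hcard
    _ (hv.mem_of_adj_of_isSeparator_deleteEdges hw hS hvS hwS h₁ hu₁)
    _ (hv.mem_of_adj_of_isSeparator_deleteEdges hw hS hvS hwS h₂ hu₂)

end IsUniversalVtx

lemma not_isSeparator_of_forall_adj_eq [Finite V] {G : SimpleGraph V} {v : V}
    (hv : ¬ G.IsSeparator {v})
    (hG : ∀ w u₁ u₂, w ≠ v → G.Adj w u₁ → G.Adj w u₂ → u₁ ≠ v → u₂ ≠ v → u₁ = u₂)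
    {S : Finset V} (hvS : v ∈ S) : ¬ G.IsSeparator S := by
  rw [IsSeparator, Finset.coe_singleton] at hv
  have hsub : Subsingleton (G.induce {v}ᶜ).ConnectedComponent := by
    rw [← Finite.card_le_one_iff_subsingleton]
    unfold componentCount at hv
    omega
  have hreach (x y : ((↑S : Set V)ᶜ : Set V)) : (G.induce (↑S)ᶜ).Reachable x y := by
    have hxv : (x : V) ≠ v := fun h => x.2 (h ▸ hvS)
    have hyv : (y : V) ≠ v := fun h => y.2 (h ▸ hvS)
    have hxy : (G.induce {v}ᶜ).Reachable ⟨x, hxv⟩ ⟨y, hyv⟩ :=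
      ConnectedComponent.exact (Subsingleton.elim _ _)
    rcases hxy.eq_or_adj_of_forall_adj_eq fun a b c hab hac =>
        Subtype.ext (hG a b c a.2 hab hac b.2 c.2) with hxy | hxy
    · obtain rfl : x = y := Subtype.ext (congrArg Subtype.val hxy :)
      rfl
    · exact (induce_adj.mpr (induce_adj.mp hxy) : (G.induce (↑S)ᶜ).Adj x y).reachable
  have : Subsingleton (G.induce (↑S)ᶜ).ConnectedComponent :=
    ⟨ConnectedComponent.ind₂ fun x y => ConnectedComponent.sound (hreach x y)⟩
  have := Finite.card_le_one_iff_subsingleton.mpr this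
  unfold IsSeparator componentCount
  omega

end SimpleGraph

/-- For `t ∈ (1/2, 1]`, there is no minimally `t`-tough graph with a universal vertex. -/
theorem stmt_16 {V : Type*} [Fintype V] (G : SimpleGraph V) (t : ℝ≥0)
    (ht1 : 1 / 2 < t) (ht2 : t ≤ 1) (v : V) (hv : G.IsUniversalVtx v)
    (htough : G.toughness = (t : ℝ≥0∞)) (hmin : G.MinimallyTough) :
    False := by
  have hle : G.toughness ≤ 1 := htough ▸ by exact_mod_cast ht2
  have hgt : 2⁻¹ < G.toughness := by
    rw [htough, ← ENNReal.coe_two, ← ENNReal.coe_inv two_ne_zero, ← one_div]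
    exact ENNReal.coe_lt_coe.mpr ht1
  obtain ⟨S, hS, -⟩ := exists_isSeparator_of_toughness_lt (htough ▸ ENNReal.coe_lt_top)
  have hvS : v ∈ S := by_contra fun hvS => hv.not_isSeparator hvS hS
  exact not_isSeparator_of_forall_adj_eq (not_isSeparator_singleton hgt v)
    (fun _ _ _ hw h₁ h₂ hu₁ hu₂ => hv.eq_of_adj_of_adj hmin hle hw h₁ h₂ hu₁ hu₂) hvS hS
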